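/- arXiv:1412.5113 — 3 statements merged into one kernel-verified Lean document; each statement's English description precedes it below -/
import Mathlib

section
/- Let G and H be groups and let τ : G → H be a bijection such that for all x, y ∈ G, τ(xy) = τ(x)τ(y) or τ(xy) = τ(y)τ(x). Then τ is a group isomorphism or a group anti-isomorphism (i.e., τ(xy) = τ(y)τ(x) for all x, y). -/
/-!
A half-homomorphism τ of groups maps 1 to 1, inverses to inverses and commuting pairs to
commuting pairs, and, when injective, τ (a * b) = τ a * τ b forces τ (b * a) = τ b * τ a.
The heart of the argument is that no x admits both a y with τ (x * y) = τ x * τ y ≠ τ y * τ x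
and a z with τ (x * z) = τ z * τ x ≠ τ x * τ z: evaluating τ at y * x * z and at
y * z⁻¹ = (y * x) * (z * x)⁻¹ leaves only relations among τ x, τ y, τ z that make τ x commute
with τ y or with τ z. So G is the union of the subgroups of those g with τ (g * w) = τ g * τ w
for all w and of those with τ (g * w) = τ w * τ g for all w, and a group is never the union of
two proper subgroups.
-/

open Function

def IsHalfHom {G H : Type*} [Mul G] [Mul H] (τ : G → H) : Prop :=
  ∀ x y, τ (x * y) = τ x * τ y ∨ τ (x * y) = τ y * τ x

namespace IsHalfHom

variable {G H : Type*} [Group G] [Group H] {τ : G → H} {x y z : G}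

theorem map_mul_self (hτ : IsHalfHom τ) (a : G) : τ (a * a) = τ a * τ a :=
  (hτ a a).elim id id

theorem map_one (hτ : IsHalfHom τ) : τ 1 = 1 := by
  simpa using hτ.map_mul_self 1

theorem map_inv (hτ : IsHalfHom τ) (a : G) : τ a⁻¹ = (τ a)⁻¹ := by
  rcases hτ a a⁻¹ with h | h <;> rw [mul_inv_cancel, hτ.map_one] at h
  · exact eq_inv_of_mul_eq_one_right h.symm
  · exact eq_inv_of_mul_eq_one_left h.symm

theorem map_commute (hτ : IsHalfHom τ) {a b : G} (hab : Commute a b) :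
    Commute (τ a) (τ b) := by
  wlog h : τ (a * b) = τ a * τ b generalizing a b
  · have h' : τ (b * a) = τ b * τ a := by
      rw [← hab.eq]; exact (hτ a b).resolve_left h
    exact (this hab.symm h').symm
  rw [commute_iff_eq]
  rcases hτ (a * b) b with h₁ | h₁ <;> rw [h] at h₁
  · have h₂ : τ (a * (a * b * b)) = τ a * τ b * (τ a * τ b) := by
      rw [← h, ← hτ.map_mul_self]
      simp only [mul_assoc, hab.left_comm b]
    rcases hτ a (a * b * b) with h₃ | h₃ <;> rw [h₃, h₁] at h₂ <;>
      simp only [mul_assoc, mul_right_inj] at h₂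
    · simpa [← mul_assoc] using h₂
    · exact h₂.symm
  · have h₂ := hτ a (b * b)
    rw [← mul_assoc, h₁, hτ.map_mul_self] at h₂
    rcases h₂ with h₂ | h₂
    · simpa [← mul_assoc] using h₂.symm
    · simp only [mul_assoc, mul_right_inj] at h₂
      exact h₂

theorem map_mul_swap (hτ : IsHalfHom τ) (hinj : Injective τ) {a b : G}
    (h : τ (a * b) = τ a * τ b) : τ (b * a) = τ b * τ a := by
  rcases hτ b a with h' | h'
  · exact h'
  · rw [h', (hτ.map_commute (hinj (h'.trans h.symm)).symm).eq]

theorem map_mul_swap_rev (hτ : IsHalfHom τ) (hinj : Injective τ) {a b : G}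
    (h : τ (a * b) = τ b * τ a) : τ (b * a) = τ a * τ b := by
  rcases hτ b a with h' | h'
  · rw [h', (hτ.map_commute (hinj (h'.trans h.symm))).eq]
  · exact h'

theorem commute_or_mul_mul_eq (hτ : IsHalfHom τ) (hXY : ¬Commute (τ x) (τ y))
    (hXZ : ¬Commute (τ x) (τ z)) (hyx : τ (y * x) = τ y * τ x) (hxz : τ (x * z) = τ z * τ x) :
    Commute (τ y) (τ z) ∨ τ z * τ x * τ y = τ y * τ x * τ z := by
  rw [commute_iff_eq]
  have h₁ := hτ y (x * z)
  have h₂ := hτ (y * x) z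
  rw [hxz] at h₁
  rw [hyx, mul_assoc] at h₂
  rcases h₁ with h₁ | h₁ <;> rcases h₂ with h₂ | h₂ <;> rw [h₁] at h₂
  · simp only [mul_assoc, mul_right_inj] at h₂
    exact absurd h₂.symm hXZ
  · left
    simpa [← mul_assoc] using h₂
  · right
    simpa [mul_assoc] using h₂
  · simp only [mul_assoc, mul_right_inj] at h₂
    exact absurd h₂ hXY

theorem commute_mul_or_commute_mul (hτ : IsHalfHom τ) (hXY : ¬Commute (τ x) (τ y))
    (hXZ : ¬Commute (τ x) (τ z)) (hyx : τ (y * x) = τ y * τ x) (hzx : τ (z * x) = τ x * τ z) :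
    Commute (τ z) (τ y * τ x) ∨ Commute (τ y) (τ x * τ z) := by
  rw [commute_iff_eq, commute_iff_eq]
  have h₁ := hτ (y * x) (z * x)⁻¹
  have h₂ := hτ y z⁻¹
  rw [show y * x * (z * x)⁻¹ = y * z⁻¹ by group, hyx, hτ.map_inv, hzx] at h₁
  rw [hτ.map_inv] at h₂
  rcases h₁ with h₁ | h₁ <;> rcases h₂ with h₂ | h₂ <;> rw [h₁] at h₂
  · rw [mul_assoc, mul_right_inj, mul_inv_rev, ← mul_assoc, mul_inv_eq_iff_eq_mul] at h₂
    exact absurd (Commute.inv_right_iff.mp h₂) hXZ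
  · rw [mul_inv_eq_iff_eq_mul, mul_assoc, eq_inv_mul_iff_mul_eq] at h₂
    exact Or.inl (by simpa [mul_assoc] using h₂)
  · rw [inv_mul_eq_iff_eq_mul, ← mul_assoc, eq_mul_inv_iff_mul_eq] at h₂
    exact Or.inr (by simpa [mul_assoc] using h₂)
  · rw [mul_inv_rev, mul_assoc, mul_right_inj, inv_mul_eq_iff_eq_mul] at h₂
    exact absurd h₂.symm hXY

theorem commute_or_commute (hτ : IsHalfHom τ) (hinj : Injective τ)
    (hy : τ (x * y) = τ x * τ y) (hz : τ (x * z) = τ z * τ x) :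
    Commute (τ x) (τ y) ∨ Commute (τ x) (τ z) := by
  by_contra! ⟨hXY, hXZ⟩
  have hyx := hτ.map_mul_swap hinj hy
  have hzx := hτ.map_mul_swap_rev hinj hz
  rcases hτ.commute_or_mul_mul_eq hXY hXZ hyx hz with hYZ | h₁ <;>
    rcases hτ.commute_mul_or_commute_mul hXY hXZ hyx hzx with h₂ | h₂
  · exact hXZ (show Commute (τ z) (τ x) by simpa using hYZ.symm.inv_right.mul_right h₂).symm
  · exact hXY (show Commute (τ y) (τ x) by simpa using h₂.mul_right hYZ.inv_right).symm
  · have h := h₂.eq.trans h₁.symm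
    rw [mul_assoc, mul_right_inj] at h
    exact hXY h.symm
  · have h := h₁.trans ((mul_assoc _ _ _).trans h₂.eq)
    rw [mul_left_inj] at h
    exact hXZ h.symm

def homSubgroup (hτ : IsHalfHom τ) : Subgroup G where
  carrier := {g | ∀ w, τ (g * w) = τ g * τ w}
  one_mem' w := by simp [hτ.map_one]
  mul_mem' {a b} ha hb w := by rw [mul_assoc, ha, hb, ha b, mul_assoc]
  inv_mem' {a} ha w := by
    rw [hτ.map_inv, eq_inv_mul_iff_mul_eq, ← ha, mul_inv_cancel_left]

def antiHomSubgroup (hτ : IsHalfHom τ) : Subgroup G where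
  carrier := {g | ∀ w, τ (g * w) = τ w * τ g}
  one_mem' w := by simp [hτ.map_one]
  mul_mem' {a b} ha hb w := by rw [mul_assoc, ha, hb, ha b, mul_assoc]
  inv_mem' {a} ha w := by
    rw [hτ.map_inv, eq_mul_inv_iff_mul_eq, ← ha, mul_inv_cancel_left]

theorem mem_homSubgroup_or_mem_antiHomSubgroup (hτ : IsHalfHom τ) (hinj : Injective τ) (g : G) :
    g ∈ hτ.homSubgroup ∨ g ∈ hτ.antiHomSubgroup := by
  change (∀ w, τ (g * w) = τ g * τ w) ∨ ∀ w, τ (g * w) = τ w * τ g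
  by_contra! ⟨⟨y, hy⟩, ⟨z, hz⟩⟩
  have hz' : τ (g * z) = τ g * τ z := (hτ g z).resolve_right hz
  have hy' : τ (g * y) = τ y * τ g := (hτ g y).resolve_left hy
  rcases hτ.commute_or_commute hinj hz' hy' with h | h
  · exact hz (hz'.trans h.eq)
  · exact hy (hy'.trans h.eq.symm)

end IsHalfHom

/-- Scott's theorem: every half-isomorphism of groups is an isomorphism
or an anti-isomorphism. -/
theorem scott_half_isomorphism {G H : Type*} [Group G] [Group H] (τ : G → H)
    (hbij : Function.Bijective τ)
    (hhalf : ∀ x y : G, τ (x * y) = τ x * τ y ∨ τ (x * y) = τ y * τ x) :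
    (∀ x y : G, τ (x * y) = τ x * τ y) ∨ (∀ x y : G, τ (x * y) = τ y * τ x) := by
  have hτ : IsHalfHom τ := hhalf
  have hcover : ((⊤ : Subgroup G) : Set G) ⊆ hτ.homSubgroup ∪ hτ.antiHomSubgroup :=
    fun g _ ↦ hτ.mem_homSubgroup_or_mem_antiHomSubgroup hbij.injective g
  rcases SubgroupClass.subset_union.mp hcover with h | h
  · exact Or.inl fun x ↦ h (Subgroup.mem_top x)
  · exact Or.inr fun x ↦ h (Subgroup.mem_top x)
end

section
/- Let G₁ and G₂ be groups and τᵢ : Gᵢ → Hᵢ half-isomorphisms for i = 1, 2 such that τ₁ is an isomorphism and τ₂ is an anti-isomorphism. Then the product map τ₁ × τ₂ : G₁ × G₂ → H₁ × H₂ is a half-isomorphism if and only if G₁ is abelian or G₂ is abelian. -/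
/-!
If `x, y` do not commute in `G₁` and `u, v` do not commute in `G₂`, then at the pair
`(x, u), (y, v)` the product map is neither multiplicative (the second coordinate would force
`u v = v u`) nor anti-multiplicative (the first would force `x y = y x`). Conversely, on an
abelian group a homomorphism is also an anti-homomorphism and vice versa.
-/

section

variable {G H : Type*} [Mul G] [Mul H] {τ : G → H}

theorem Function.Injective.mul_comm_of_map_mul_of_antiMul (hτ : Function.Injective τ)
    (hanti : ∀ x y, τ (x * y) = τ y * τ x) {x y : G} (h : τ (x * y) = τ x * τ y) :
    x * y = y * x :=
  hτ (h.trans (hanti y x).symm)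

theorem Function.Injective.mul_comm_of_map_mul_swap_of_mul (hτ : Function.Injective τ)
    (hmul : ∀ x y, τ (x * y) = τ x * τ y) {x y : G} (h : τ (x * y) = τ y * τ x) :
    x * y = y * x :=
  hτ (h.trans (hmul y x).symm)

end

/-- The product of an isomorphism and an anti-isomorphism is a
half-isomorphism iff one of the two source groups is abelian. -/
theorem prod_half_isomorphism_iff {G₁ G₂ H₁ H₂ : Type*}
    [Group G₁] [Group G₂] [Group H₁] [Group H₂]
    (τ₁ : G₁ → H₁) (τ₂ : G₂ → H₂)
    (hbij₁ : Function.Bijective τ₁) (hbij₂ : Function.Bijective τ₂)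
    (hiso : ∀ x y : G₁, τ₁ (x * y) = τ₁ x * τ₁ y)
    (hanti : ∀ x y : G₂, τ₂ (x * y) = τ₂ y * τ₂ x) :
    (∀ p q : G₁ × G₂,
        Prod.map τ₁ τ₂ (p * q) = Prod.map τ₁ τ₂ p * Prod.map τ₁ τ₂ q ∨
        Prod.map τ₁ τ₂ (p * q) = Prod.map τ₁ τ₂ q * Prod.map τ₁ τ₂ p) ↔
      (∀ a b : G₁, a * b = b * a) ∨ (∀ a b : G₂, a * b = b * a) := by
  constructor
  · intro hhalf
    by_contra! ⟨⟨x, y, hxy⟩, u, v, huv⟩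
    rcases hhalf (x, u) (y, v) with hmul | hswap
    · exact huv (hbij₂.injective.mul_comm_of_map_mul_of_antiMul hanti (congrArg Prod.snd hmul))
    · exact hxy (hbij₁.injective.mul_comm_of_map_mul_swap_of_mul hiso (congrArg Prod.fst hswap))
  · rintro (hcomm₁ | hcomm₂) p q
    · exact .inr (Prod.ext (by rw [Prod.map_fst, Prod.fst_mul, hcomm₁, hiso]; rfl) (hanti _ _))
    · exact .inl (Prod.ext (hiso _ _) (by rw [Prod.map_snd, Prod.snd_mul, hcomm₂, hanti]; rfl))
end

section
/- There exists a loop Q of order 8 (given by an explicit Cayley table) that is automorphic but not Moufang, and the permutation φ = (3 5)(4 6)(7 8) of its elements is a half-automorphism of Q that is neither an automorphism nor an anti-automorphism. -/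
/-- The Cayley table (0-indexed) of the automorphic non-Moufang loop `Q₂`
of order 8. -/
def q2 : Fin 8 → Fin 8 → Fin 8 :=
  ![![0, 1, 2, 3, 4, 5, 6, 7],
    ![1, 0, 3, 2, 5, 4, 7, 6],
    ![2, 3, 0, 1, 6, 7, 5, 4],
    ![3, 2, 1, 0, 7, 6, 4, 5],
    ![4, 5, 7, 6, 0, 1, 3, 2],
    ![5, 4, 6, 7, 1, 0, 2, 3],
    ![6, 7, 4, 5, 2, 3, 1, 0],
    ![7, 6, 5, 4, 3, 2, 0, 1]]

/-- The permutation `φ = (3 5)(4 6)(7 8)` (here 0-indexed: `(2 4)(3 5)(6 7)`). -/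
def phi2 : Fin 8 → Fin 8 := ![0, 1, 4, 5, 2, 3, 7, 6]

/-! Left and right multiplications of `Q₂` are bijective, so each inner mapping `g` is the unique
solution of its defining equation `m ∘ g = f`, with `m` a multiplication map. Hence `g` is an
automorphism as soon as `m (x * y) = f (u * v)` whenever `m x = f u` and `m y = f v`: a statement
about the Cayley table alone, checked by enumeration. -/

open Function

theorem map_mul_of_injective_comp {α : Type*} {mul : α → α → α} {m f g : α → α}
    (hm : Injective m) (hg : ∀ z, m (g z) = f z)
    (hf : ∀ u v x, m x = f u → ∀ y, m y = f v → m (mul x y) = f (mul u v)) (u v : α) :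
    g (mul u v) = mul (g u) (g v) :=
  hm <| by rw [hg]; exact (hf u v _ (hg u) _ (hg v)).symm

lemma q2_left_bijective (a : Fin 8) : Bijective (q2 a) := by
  revert a; decide

lemma q2_right_bijective (a : Fin 8) : Bijective (fun x => q2 x a) := by
  revert a; decide

lemma q2_left_inner_map_mul : ∀ a b u v x : Fin 8, q2 (q2 a b) x = q2 a (q2 b u) →
    ∀ y, q2 (q2 a b) y = q2 a (q2 b v) → q2 (q2 a b) (q2 x y) = q2 a (q2 b (q2 u v)) := by
  decide

lemma q2_right_inner_map_mul : ∀ a b u v x : Fin 8, q2 x (q2 a b) = q2 (q2 u a) b →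
    ∀ y, q2 y (q2 a b) = q2 (q2 v a) b → q2 (q2 x y) (q2 a b) = q2 (q2 (q2 u v) a) b := by
  decide

lemma q2_middle_inner_map_mul : ∀ a u v x : Fin 8, q2 a x = q2 u a →
    ∀ y, q2 a y = q2 v a → q2 a (q2 x y) = q2 (q2 u v) a := by
  decide

/-- `Q₂` is a loop (with identity 1 and cancellation), it is automorphic
(all inner mappings `ℓ_{a,b}`, `r_{a,b}`, `T_a` are automorphisms), it is not
Moufang, and `φ` is a half-automorphism of `Q₂` which is neither an
automorphism nor an anti-automorphism. -/
theorem q2_automorphic_not_moufang_half_automorphism :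
    -- loop axioms: identity and two-sided cancellation
    (∀ x : Fin 8, q2 0 x = x ∧ q2 x 0 = x) ∧
    (∀ a : Fin 8, Function.Bijective (fun x => q2 a x) ∧
      Function.Bijective (fun x => q2 x a)) ∧
    -- automorphic: the left inner mappings ℓ_{a,b} are automorphisms
    (∀ a b : Fin 8, ∀ g : Fin 8 → Fin 8,
      (∀ z, q2 (q2 a b) (g z) = q2 a (q2 b z)) →
      ∀ u v, g (q2 u v) = q2 (g u) (g v)) ∧
    -- the right inner mappings r_{a,b} are automorphisms
    (∀ a b : Fin 8, ∀ g : Fin 8 → Fin 8,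
      (∀ z, q2 (g z) (q2 a b) = q2 (q2 z a) b) →
      ∀ u v, g (q2 u v) = q2 (g u) (g v)) ∧
    -- the middle inner mappings T_a are automorphisms
    (∀ a : Fin 8, ∀ g : Fin 8 → Fin 8,
      (∀ z, q2 a (g z) = q2 z a) →
      ∀ u v, g (q2 u v) = q2 (g u) (g v)) ∧
    -- not Moufang
    (∃ x y z : Fin 8, q2 (q2 (q2 x y) x) z ≠ q2 x (q2 y (q2 x z))) ∧
    -- φ is a half-automorphism
    Function.Bijective phi2 ∧
    (∀ x y : Fin 8, phi2 (q2 x y) = q2 (phi2 x) (phi2 y) ∨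
      phi2 (q2 x y) = q2 (phi2 y) (phi2 x)) ∧
    -- φ is neither an automorphism nor an anti-automorphism
    (∃ x y : Fin 8, phi2 (q2 x y) ≠ q2 (phi2 x) (phi2 y)) ∧
    (∃ x y : Fin 8, phi2 (q2 x y) ≠ q2 (phi2 y) (phi2 x)) := by
  refine ⟨by decide, fun a => ⟨q2_left_bijective a, q2_right_bijective a⟩, ?_, ?_, ?_,
    ⟨2, 0, 4, by decide⟩, by decide, by decide, ⟨2, 6, by decide⟩, ⟨2, 4, by decide⟩⟩
  · exact fun a b _ hg =>
      map_mul_of_injective_comp (q2_left_bijective _).1 hg (q2_left_inner_map_mul a b)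
  · exact fun a b _ hg =>
      map_mul_of_injective_comp (q2_right_bijective _).1 hg (q2_right_inner_map_mul a b)
  · exact fun a _ hg =>
      map_mul_of_injective_comp (q2_left_bijective a).1 hg (q2_middle_inner_map_mul a)
end
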